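/- Let S be a positive semidefinite n×n real symmetric matrix, let E be an n×n real symmetric matrix, and let V be a matrix whose columns form a basis of the kernel of S. If VᵀEV is positive definite, then there exists δ₀ > 0 such that S + δ·E is positive definite for all 0 < δ < δ₀. -/

import Mathlib

open Matrix

theorem stmt4 {n k : ℕ} (S E : Matrix (Fin n) (Fin n) ℝ)
    (hSsymm : S.IsSymm) (hEsymm : E.IsSymm) (hS : S.PosSemidef)
    (V : Matrix (Fin n) (Fin k) ℝ)
    (hVindep : LinearIndependent ℝ (fun j : Fin k => fun i : Fin n => V i j))
    (hVker : ∀ x : Fin n → ℝ, S.mulVec x = 0 ↔ ∃ c : Fin k → ℝ, x = V.mulVec c)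
    (hVEV : (Vᵀ * E * V).PosDef) :
    ∃ δ₀ > 0, ∀ δ : ℝ, 0 < δ → δ < δ₀ → (S + δ • E).PosDef := by
  classical
  set g : (Fin n → ℝ) → ℝ := fun x => x ⬝ᵥ S *ᵥ x with hg
  set h : (Fin n → ℝ) → ℝ := fun x => x ⬝ᵥ E *ᵥ x with hh
  have hgcont : Continuous g := by
    simp only [hg, dotProduct, mulVec]; fun_prop
  have hhcont : Continuous h := by
    simp only [hh, dotProduct, mulVec]; fun_prop
  have hg0 : ∀ x, 0 ≤ g x := by
    intro x; simpa using hS.dotProduct_mulVec_nonneg x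
  -- if x ≠ 0 lies in the kernel of S, then h x > 0
  have hpos : ∀ x : Fin n → ℝ, x ≠ 0 → S.mulVec x = 0 → 0 < h x := by
    intro x hx hker
    obtain ⟨c, rfl⟩ := (hVker x).1 hker
    have hc : c ≠ 0 := by
      rintro rfl; exact hx (by simp)
    have := hVEV.dotProduct_mulVec_pos hc
    simp only [star_trivial] at this
    calc (0:ℝ) < c ⬝ᵥ (Vᵀ * E * V) *ᵥ c := this
      _ = h (V *ᵥ c) := by
        simp only [hh, ← mulVec_mulVec, dotProduct_mulVec, vecMul_transpose]
  -- if g x = 0 then x ∈ ker S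
  have hgker : ∀ x : Fin n → ℝ, g x = 0 → S.mulVec x = 0 := by
    intro x hx
    have := (hS.dotProduct_mulVec_zero_iff x).1 (by simpa using hx)
    exact this
  -- kernel of S + δ E posdef statement reduces to unit vectors
  have key : ∀ δ₀ > 0, (∀ x : Fin n → ℝ, ‖x‖ = 1 → ∀ δ : ℝ, 0 < δ → δ < δ₀ → 0 < g x + δ * h x) →
      ∀ δ : ℝ, 0 < δ → δ < δ₀ → (S + δ • E).PosDef := by
    intro δ₀ hδ₀ H δ hδ hδδ
    refine Matrix.PosDef.of_dotProduct_mulVec_pos ?_ ?_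
    · have : (S + δ • E)ᵀ = S + δ • E := by
        rw [transpose_add, transpose_smul, hSsymm.eq, hEsymm.eq]
      rw [Matrix.IsHermitian]
      ext i j
      simp only [conjTranspose_apply, star_trivial]
      exact congrFun (congrFun this i) j
    · intro x hx
      have hxn : (0:ℝ) < ‖x‖ := norm_pos_iff.mpr hx
      set u : Fin n → ℝ := ‖x‖⁻¹ • x with hu
      have hun : ‖u‖ = 1 := by
        rw [hu, norm_smul, norm_inv, norm_norm, inv_mul_cancel₀ hxn.ne']
      have hxu : x = ‖x‖ • u := by
        rw [hu, smul_smul, mul_inv_cancel₀ hxn.ne', one_smul]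
      have hq : ∀ A : Matrix (Fin n) (Fin n) ℝ, x ⬝ᵥ A *ᵥ x = ‖x‖^2 * (u ⬝ᵥ A *ᵥ u) := by
        intro A
        simp only [hu, mulVec_smul, dotProduct_smul, smul_dotProduct, smul_eq_mul]
        field_simp
      have hquad : x ⬝ᵥ (S + δ • E) *ᵥ x = ‖x‖^2 * (g u + δ * h u) := by
        rw [hq]
        simp only [add_mulVec, smul_mulVec, dotProduct_add, dotProduct_smul, smul_eq_mul]
        rfl
      have := H u hun δ hδ hδδ
      simp only [star_trivial]
      rw [hquad]
      positivity
  -- the compact sets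
  set C : Set (Fin n → ℝ) := {x | ‖x‖ = 1 ∧ h x ≤ 0} with hC
  have hCcomp : IsCompact C := by
    have : C = Metric.sphere (0 : Fin n → ℝ) 1 ∩ h ⁻¹' (Set.Iic 0) := by
      ext x; simp [hC, Set.mem_setOf_eq, mem_sphere_iff_norm, sub_zero]
    rw [this]
    exact (isCompact_sphere 0 1).inter_right (isClosed_Iic.preimage hhcont)
  by_cases hCe : C.Nonempty
  · -- m = min of g on C, positive
    obtain ⟨x₀, hx₀C, hx₀min⟩ := hCcomp.exists_isMinOn hCe hgcont.continuousOn
    set m := g x₀ with hm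
    have hmpos : 0 < m := by
      rcases lt_or_eq_of_le (hg0 x₀) with hlt | heq
      · exact hlt
      · exfalso
        have hx₀ne : x₀ ≠ 0 := by
          intro h0; rw [h0] at hx₀C; simp [hC] at hx₀C
        have := hpos x₀ hx₀ne (hgker x₀ heq.symm)
        exact absurd hx₀C.2 (not_le.mpr this)
    -- M = max of |h| on the sphere
    have hsne : (Metric.sphere (0 : Fin n → ℝ) 1).Nonempty := ⟨x₀, by
      simpa [mem_sphere_iff_norm, sub_zero] using hx₀C.1⟩
    obtain ⟨y₀, hy₀, hy₀max⟩ := (isCompact_sphere (0 : Fin n → ℝ) 1).exists_isMaxOn hsne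
      (continuous_abs.comp hhcont).continuousOn
    set M := |h y₀| with hM
    have hM0 : 0 ≤ M := abs_nonneg _
    refine ⟨m / (M + 1), div_pos hmpos (by linarith), ?_⟩
    refine key _ (div_pos hmpos (by linarith)) ?_
    intro x hxn δ hδ hδδ
    by_cases hhx : 0 < h x
    · have := hg0 x
      nlinarith
    · have hxC : x ∈ C := ⟨hxn, not_lt.1 hhx⟩
      have h1 : m ≤ g x := hx₀min hxC
      have h2 : |h x| ≤ M := hy₀max (by simp [mem_sphere_iff_norm, sub_zero, hxn])
      have h3 : δ * (M + 1) < m :=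
        (lt_div_iff₀ (by linarith : (0:ℝ) < M + 1)).1 hδδ
      have h4 : -(δ * |h x|) ≤ δ * h x := by
        have := neg_abs_le (h x)
        nlinarith
      nlinarith [abs_nonneg (h x)]
  · -- C empty: every unit vector has h x > 0, so δ₀ = 1 works
    refine ⟨1, one_pos, ?_⟩
    refine key 1 one_pos ?_
    intro x hxn δ hδ _
    have hhx : 0 < h x := by
      by_contra hle
      exact hCe ⟨x, hxn, not_lt.1 hle⟩
    have := hg0 x
    nlinarith
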